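/- arXiv:2404.15885 — 2 statements merged into one kernel-verified Lean document; each statement's English description precedes it below -/
import Mathlib

section
/- Let 0 < T < T_f, let v : [T,T_f] → ℝ be continuous, and let a, b : [T,T_f] → [0,∞) be continuous. If v(t) ≤ b(t) + ∫_t^{T_f} a(s) v(s) ds for all t ∈ [T,T_f], then v(t) ≤ b(t) + ∫_t^{T_f} a(s) b(s) exp(∫_t^s a(s′) ds′) ds for all t ∈ [T,T_f]. -/
/-!
Fix `t`, put `A(x) = ∫_t^x a` and `S(x) = ∫_{T_f}^x a v`, so that the hypothesis reads
`v ≤ b - S`. Since `a ≥ 0`, `(e^A S)' = e^A a (S + v) ≤ a b e^A`; integrating over `[t, T_f]`,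
where `A(t) = 0` and `S(T_f) = 0`, gives `∫_t^{T_f} a v = -S(t) ≤ ∫_t^{T_f} a b e^A`.
-/

open intervalIntegral Set Real

section Primitive

variable {f : ℝ → ℝ} {c d x₀ : ℝ}

theorem ContinuousOn.continuousOn_primitive_Icc (hf : ContinuousOn f (Icc c d))
    (hx₀ : x₀ ∈ Icc c d) : ContinuousOn (fun x => ∫ s in x₀..x, f s) (Icc c d) := by
  have hcd : c ≤ d := hx₀.1.trans hx₀.2
  have h := continuousOn_primitive_interval' (μ := MeasureTheory.volume)
    (hf.intervalIntegrable_of_Icc hcd) (show x₀ ∈ uIcc c d by rwa [uIcc_of_le hcd])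
  rwa [uIcc_of_le hcd] at h

theorem ContinuousOn.hasDerivAt_primitive (hf : ContinuousOn f (Icc c d)) (hx₀ : x₀ ∈ Icc c d)
    {x : ℝ} (hx : x ∈ Ioo c d) : HasDerivAt (fun y => ∫ s in x₀..y, f s) (f x) x :=
  integral_hasDerivAt_right
    (hf.mono (uIcc_subset_Icc hx₀ (Ioo_subset_Icc_self hx))).intervalIntegrable
    ((hf.mono Ioo_subset_Icc_self).stronglyMeasurableAtFilter isOpen_Ioo x hx)
    (hf.continuousAt (Icc_mem_nhds hx.1 hx.2))

end Primitive

theorem integral_mul_le_integral_mul_exp_of_le_add_integral {a v b : ℝ → ℝ} {t T : ℝ}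
    (htT : t ≤ T) (hv : ContinuousOn v (Icc t T)) (ha : ContinuousOn a (Icc t T))
    (hb : ContinuousOn b (Icc t T)) (ha0 : ∀ s ∈ Icc t T, 0 ≤ a s)
    (hineq : ∀ s ∈ Icc t T, v s ≤ b s + ∫ r in s..T, a r * v r) :
    ∫ s in t..T, a s * v s ≤ ∫ s in t..T, a s * b s * exp (∫ u in t..s, a u) := by
  have ht : t ∈ Icc t T := left_mem_Icc.2 htT
  have hT : T ∈ Icc t T := right_mem_Icc.2 htT
  have hav : ContinuousOn (fun s => a s * v s) (Icc t T) := ha.mul hv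
  set A : ℝ → ℝ := fun x => ∫ u in t..x, a u
  set S : ℝ → ℝ := fun x => ∫ s in T..x, a s * v s
  have hA : ContinuousOn A (Icc t T) := ha.continuousOn_primitive_Icc ht
  have hderiv : ∀ x ∈ Ioo t T, HasDerivAt (fun x => exp (A x) * S x)
      (exp (A x) * a x * S x + exp (A x) * (a x * v x)) x := fun x hx =>
    ((hasDerivAt_exp (A x)).comp x (ha.hasDerivAt_primitive ht hx)).mul
      (hav.hasDerivAt_primitive hT hx)
  have hbound : ∀ x ∈ Ioo t T,
      exp (A x) * a x * S x + exp (A x) * (a x * v x) ≤ a x * b x * exp (A x) := by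
    intro x hx
    have hxI : x ∈ Icc t T := Ioo_subset_Icc_self hx
    have hSx : S x = -∫ r in x..T, a r * v r := integral_symm x T
    have hSv : a x * (S x + v x) ≤ a x * b x :=
      mul_le_mul_of_nonneg_left (by linarith [hineq x hxI]) (ha0 x hxI)
    nlinarith [exp_pos (A x)]
  have hG := sub_le_integral_of_hasDeriv_right_of_le (g := fun x => exp (A x) * S x)
    (φ := fun s => a s * b s * exp (A s)) htT
    ((continuous_exp.comp_continuousOn hA).mul (hav.continuousOn_primitive_Icc hT))
    (fun x hx => (hderiv x hx).hasDerivWithinAt)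
    ((ha.mul hb).mul (continuous_exp.comp_continuousOn hA)).integrableOn_Icc hbound
  simpa only [A, S, integral_same, mul_zero, exp_zero, one_mul, zero_sub, integral_symm T t,
    neg_neg] using hG

theorem gronwall_backwards_general (T Tf : ℝ)
    (v a b : ℝ → ℝ)
    (hv : ContinuousOn v (Set.Icc T Tf))
    (ha : ContinuousOn a (Set.Icc T Tf))
    (hb : ContinuousOn b (Set.Icc T Tf))
    (ha0 : ∀ t ∈ Set.Icc T Tf, 0 ≤ a t)
    (hineq : ∀ t ∈ Set.Icc T Tf, v t ≤ b t + ∫ s in t..Tf, a s * v s) :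
    ∀ t ∈ Set.Icc T Tf,
      v t ≤ b t + ∫ s in t..Tf, a s * b s * Real.exp (∫ u in t..s, a u) := by
  intro t ht
  have hsub : Icc t Tf ⊆ Icc T Tf := Icc_subset_Icc_left ht.1
  have hR := integral_mul_le_integral_mul_exp_of_le_add_integral ht.2 (hv.mono hsub)
    (ha.mono hsub) (hb.mono hsub) (fun s hs => ha0 s (hsub hs)) (fun s hs => hineq s (hsub hs))
  linarith [hineq t ht]

/-- **Backwards Grönwall inequality.**  If `v(t) ≤ b(t) + ∫_t^{T_f} a(s) v(s) ds`
on `[T, T_f]`, with `a, b` continuous and nonnegative and `v` continuous, then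
`v(t) ≤ b(t) + ∫_t^{T_f} a(s) b(s) exp(∫_t^s a) ds` on `[T, T_f]`. -/
theorem gronwall_backwards (T Tf : ℝ) (hT : 0 < T) (hTTf : T < Tf)
    (v a b : ℝ → ℝ)
    (hv : ContinuousOn v (Set.Icc T Tf))
    (ha : ContinuousOn a (Set.Icc T Tf))
    (hb : ContinuousOn b (Set.Icc T Tf))
    (ha0 : ∀ t ∈ Set.Icc T Tf, 0 ≤ a t)
    (hb0 : ∀ t ∈ Set.Icc T Tf, 0 ≤ b t)
    (hineq : ∀ t ∈ Set.Icc T Tf, v t ≤ b t + ∫ s in t..Tf, a s * v s) :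
    ∀ t ∈ Set.Icc T Tf,
      v t ≤ b t + ∫ s in t..Tf, a s * b s * Real.exp (∫ u in t..s, a u) :=
  gronwall_backwards_general T Tf v a b hv ha hb ha0 hineq
end

section
/- There exists a constant C > 0 such that for every h ∈ H²(ℝ³) with x ↦ |x|·Δh(x) belonging to L²(ℝ³), one has ‖∇h‖_{L²(ℝ³)} ≤ C ‖ |x| Δh ‖_{L²(ℝ³)}. -/
/-!
Integration by parts gives `‖∇h‖² = -∫ h Δh`. With `q = |x|² + ε`, the pointwise AM-GM bound
`-h Δh ≤ h² / (8 q) + 2 q (Δh)²` and the regularized Hardy inequality `∫ h² / q ≤ 4 ‖∇h‖²` give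
`‖∇h‖² ≤ ‖∇h‖² / 2 + 2 ‖|x| Δh‖² + 2 ε ‖Δh‖²`; let `ε → 0`, so `C = 2`.
The Hardy inequality comes from integrating `h²` against the divergence of the field `x / q`,
which is at least `1 / q` in `ℝ³`, integrating by parts, and using AM-GM once more.
-/

noncomputable section

open MeasureTheory Real

abbrev E3 := EuclideanSpace ℝ (Fin 3)

/-- The `i`-th coordinate direction in `ℝ³`. -/
noncomputable def e3 (i : Fin 3) : E3 := EuclideanSpace.single i 1

/-- Partial derivative of `h : ℝ³ → ℝ` in the `i`-th coordinate direction. -/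
noncomputable def dd (i : Fin 3) (h : E3 → ℝ) (x : E3) : ℝ := fderiv ℝ h x (e3 i)

/-- The Laplacian `Δh = Σᵢ ∂ᵢ∂ᵢ h`. -/
noncomputable def lap (h : E3 → ℝ) (x : E3) : ℝ := ∑ i, dd i (dd i h) x

open Filter Topology
open scoped RealInnerProductSpace

lemma neg_two_mul_inner_div_le {F : Type*} [NormedAddCommGroup F] [InnerProductSpace ℝ F]
    (a : ℝ) (v x : F) {q : ℝ} (hq : 0 < q) (hxq : ‖x‖ ^ 2 ≤ q) :
    -(2 * a * ⟪v, x⟫) / q ≤ a ^ 2 / q / 2 + 2 * ‖v‖ ^ 2 := by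
  have hinner : -(a * ⟪v, x⟫) ≤ |a| * (‖v‖ * ‖x‖) :=
    calc -(a * ⟪v, x⟫) ≤ |a| * |⟪v, x⟫| := (neg_le_abs _).trans_eq (abs_mul _ _)
      _ ≤ |a| * (‖v‖ * ‖x‖) := mul_le_mul_of_nonneg_left (abs_real_inner_le_norm v x) (abs_nonneg a)
  have hrhs : (a ^ 2 / q / 2 + 2 * ‖v‖ ^ 2) * q = a ^ 2 / 2 + 2 * ‖v‖ ^ 2 * q := by
    field_simp
  rw [div_le_iff₀ hq, hrhs]
  nlinarith [sq_nonneg (|a| - 2 * ‖v‖ * ‖x‖), sq_abs a,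
    mul_le_mul_of_nonneg_left hxq (sq_nonneg ‖v‖)]

lemma neg_mul_le_sq_div_add {a b q : ℝ} (hq : 0 < q) :
    -(a * b) ≤ a ^ 2 / q / 8 + 2 * q * b ^ 2 := by
  have hrhs : (a ^ 2 / q / 8 + 2 * q * b ^ 2) * (8 * q) = a ^ 2 + 16 * q ^ 2 * b ^ 2 := by
    field_simp; ring
  rw [← mul_le_mul_iff_of_pos_right (by positivity : 0 < 8 * q), hrhs]
  nlinarith [sq_nonneg (a + 4 * q * b)]

lemma gradient_apply_eq_dd (h : E3 → ℝ) (x : E3) (i : Fin 3) : gradient h x i = dd i h x := by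
  rw [dd, gradient, ← InnerProductSpace.toDual_symm_apply, e3, EuclideanSpace.inner_single_right]
  simp

lemma norm_gradient_sq_eq_sum (h : E3 → ℝ) (x : E3) :
    ‖gradient h x‖ ^ 2 = ∑ i, dd i h x ^ 2 := by
  simp only [EuclideanSpace.real_norm_sq_eq, gradient_apply_eq_dd]

lemma inner_gradient_eq_sum (h : E3 → ℝ) (x : E3) :
    ⟪gradient h x, x⟫ = ∑ i, dd i h x * x i := by
  simp only [PiLp.inner_apply, gradient_apply_eq_dd, RCLike.inner_apply, conj_trivial, mul_comm]

lemma contDiff_dd {n : WithTop ℕ∞} {h : E3 → ℝ} (hh : ContDiff ℝ (n + 1) h) (i : Fin 3) :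
    ContDiff ℝ n (dd i h) :=
  (hh.fderiv_right le_rfl).clm_apply contDiff_const

lemma dd_sq {h : E3 → ℝ} {x : E3} (hh : DifferentiableAt ℝ h x) (i : Fin 3) :
    dd i (fun y => h y ^ 2) x = 2 * h x * dd i h x := by
  simp [dd, fderiv_fun_pow 2 hh]

lemma integral_mul_dd_eq_neg {f g : E3 → ℝ} (i : Fin 3) (hf : Differentiable ℝ f)
    (hg : Differentiable ℝ g) (hfg' : Integrable (fun x => f x * dd i g x))
    (hf'g : Integrable (fun x => dd i f x * g x)) (hfg : Integrable (fun x => f x * g x)) :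
    ∫ x, f x * dd i g x = -∫ x, dd i f x * g x :=
  integral_mul_fderiv_eq_neg_fderiv_mul_of_integrable hf'g hfg' hfg (fun x _ => hf x)
    fun x _ => hg x

lemma integrable_norm_gradient_sq {h : E3 → ℝ} (hd : ∀ i, MemLp (dd i h) 2 volume) :
    Integrable (fun x => ‖gradient h x‖ ^ 2) := by
  simpa only [norm_gradient_sq_eq_sum] using
    integrable_finsetSum Finset.univ fun i _ => (hd i).integrable_sq

lemma integral_dd_sq_eq_neg {h : E3 → ℝ} (hh : ContDiff ℝ 2 h) (h2 : MemLp h 2 volume)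
    (i : Fin 3) (hd : MemLp (dd i h) 2 volume) (hdd : MemLp (dd i (dd i h)) 2 volume) :
    ∫ x, dd i h x ^ 2 = -∫ x, h x * dd i (dd i h) x := by
  rw [integral_mul_dd_eq_neg i (hh.differentiable two_ne_zero)
    ((contDiff_dd hh i).differentiable one_ne_zero) (h2.integrable_mul hdd)
    (hd.integrable_mul hd) (h2.integrable_mul hd), neg_neg]
  simp only [sq]

lemma integral_norm_gradient_sq_eq_neg_integral_mul_lap {h : E3 → ℝ} (hh : ContDiff ℝ 2 h)
    (h2 : MemLp h 2 volume) (hd : ∀ i, MemLp (dd i h) 2 volume)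
    (hdd : ∀ i, MemLp (dd i (dd i h)) 2 volume) :
    ∫ x, ‖gradient h x‖ ^ 2 = -∫ x, h x * lap h x := by
  simp only [norm_gradient_sq_eq_sum, lap, Finset.mul_sum]
  rw [integral_finsetSum _ fun i _ => (hd i).integrable_sq, integral_finsetSum _ fun i _ =>
    (h2.integrable_mul (hdd i) : Integrable (fun x => h x * dd i (dd i h) x)),
    ← Finset.sum_neg_distrib]
  exact Finset.sum_congr rfl fun i _ => integral_dd_sq_eq_neg hh h2 i (hd i) (hdd i)

def regNormSq (ε : ℝ) (x : E3) : ℝ := ‖x‖ ^ 2 + ε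

def hardyField (ε : ℝ) (i : Fin 3) (x : E3) : ℝ := x i / regNormSq ε x

section HardyField

variable {ε : ℝ}

lemma regNormSq_pos (hε : 0 < ε) (x : E3) : 0 < regNormSq ε x := by
  unfold regNormSq; positivity

lemma continuous_regNormSq : Continuous (regNormSq ε) := by
  unfold regNormSq; fun_prop

lemma hasFDerivAt_hardyField (hε : 0 < ε) (i : Fin 3) (x : E3) :
    HasFDerivAt (hardyField ε i)
      (x i • (-(regNormSq ε x ^ 2)⁻¹ • 2 • innerSL ℝ x)
        + (regNormSq ε x)⁻¹ • EuclideanSpace.proj i) x := by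
  have hq : HasFDerivAt (regNormSq ε) (2 • innerSL ℝ x) x :=
    (hasStrictFDerivAt_norm_sq x).hasFDerivAt.add_const ε
  exact (EuclideanSpace.proj i : E3 →L[ℝ] ℝ).hasFDerivAt.mul
    ((hasDerivAt_inv (regNormSq_pos hε x).ne').comp_hasFDerivAt x hq)

lemma dd_hardyField (hε : 0 < ε) (i : Fin 3) (x : E3) :
    dd i (hardyField ε i) x = (regNormSq ε x - 2 * x i ^ 2) / regNormSq ε x ^ 2 := by
  rw [dd, (hasFDerivAt_hardyField hε i x).fderiv]
  have hq := (regNormSq_pos hε x).ne'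
  simp only [e3, add_apply, smul_apply, smul_eq_mul, nsmul_eq_mul, coe_innerSL_apply,
    EuclideanSpace.inner_single_right, conj_trivial, PiLp.proj_apply, PiLp.single_eq_same]
  field_simp
  ring

lemma inv_regNormSq_le_sum_dd_hardyField (hε : 0 < ε) (x : E3) :
    (regNormSq ε x)⁻¹ ≤ ∑ i, dd i (hardyField ε i) x := by
  have hq := regNormSq_pos hε x
  have hxq : ‖x‖ ^ 2 ≤ regNormSq ε x := le_add_of_nonneg_right hε.le
  simp only [dd_hardyField hε, ← Finset.sum_div, Finset.sum_sub_distrib, ← Finset.mul_sum,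
    ← EuclideanSpace.real_norm_sq_eq, Finset.sum_const, Finset.card_univ, Fintype.card_fin,
    nsmul_eq_mul, Nat.cast_ofNat]
  rw [inv_eq_one_div, div_le_div_iff₀ hq (by positivity)]
  nlinarith [mul_le_mul_of_nonneg_left hxq hq.le]

lemma abs_hardyField_le (hε : 0 < ε) (i : Fin 3) (x : E3) :
    |hardyField ε i x| ≤ 1 / (2 * √ε) := by
  have hq := regNormSq_pos hε x
  have hxi : |x i| ≤ ‖x‖ := by simpa using PiLp.norm_apply_le x i
  have hsε : √ε ^ 2 = ε := sq_sqrt hε.le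
  rw [hardyField, abs_div, abs_of_pos hq, div_le_div_iff₀ hq (by positivity)]
  unfold regNormSq
  nlinarith [sq_nonneg (‖x‖ - √ε), norm_nonneg x, sqrt_nonneg ε]

lemma abs_dd_hardyField_le (hε : 0 < ε) (i : Fin 3) (x : E3) :
    |dd i (hardyField ε i) x| ≤ 3 / ε := by
  have hq := regNormSq_pos hε x
  have hxi : x i ^ 2 ≤ ‖x‖ ^ 2 := by
    simpa using pow_le_pow_left₀ (abs_nonneg _) (PiLp.norm_apply_le x i) 2
  have hεq : ε ≤ regNormSq ε x := le_add_of_nonneg_left (sq_nonneg _)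
  have hnum : |regNormSq ε x - 2 * x i ^ 2| ≤ 3 * regNormSq ε x := by
    unfold regNormSq at *
    rw [abs_le]; constructor <;> nlinarith [sq_nonneg (x i)]
  rw [dd_hardyField hε, abs_div, abs_of_pos (pow_pos hq 2), div_le_div_iff₀ (pow_pos hq 2) hε]
  nlinarith [mul_le_mul hnum hεq hε.le (by positivity)]

lemma differentiable_hardyField (hε : 0 < ε) (i : Fin 3) : Differentiable ℝ (hardyField ε i) :=
  fun x => (hasFDerivAt_hardyField hε i x).differentiableAt

lemma continuous_dd_hardyField (hε : 0 < ε) (i : Fin 3) :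
    Continuous (dd i (hardyField ε i)) := by
  simp only [funext (dd_hardyField hε i)]
  exact .div (by unfold regNormSq; fun_prop) (by unfold regNormSq; fun_prop)
    fun x => (pow_pos (regNormSq_pos hε x) 2).ne'

lemma integrable_mul_hardyField (hε : 0 < ε) {f : E3 → ℝ} (hf : Integrable f) (i : Fin 3) :
    Integrable (fun x => f x * hardyField ε i x) :=
  hf.mul_bdd (differentiable_hardyField hε i).continuous.aestronglyMeasurable
    (ae_of_all _ (abs_hardyField_le hε i))

lemma integrable_mul_dd_hardyField (hε : 0 < ε) {f : E3 → ℝ} (hf : Integrable f) (i : Fin 3) :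
    Integrable (fun x => f x * dd i (hardyField ε i) x) :=
  hf.mul_bdd (continuous_dd_hardyField hε i).aestronglyMeasurable
    (ae_of_all _ (abs_dd_hardyField_le hε i))

lemma integrable_div_regNormSq (hε : 0 < ε) {f : E3 → ℝ} (hf : Integrable f) :
    Integrable (fun x => f x / regNormSq ε x) := by
  refine hf.mul_bdd (c := ε⁻¹)
    (continuous_regNormSq.inv₀ fun x => (regNormSq_pos hε x).ne').aestronglyMeasurable
    (ae_of_all _ fun x => ?_)
  rw [Real.norm_eq_abs, abs_inv, abs_of_pos (regNormSq_pos hε x)]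
  exact inv_anti₀ hε (le_add_of_nonneg_left (sq_nonneg _))

lemma integrable_mul_dd_mul_hardyField (hε : 0 < ε) {h : E3 → ℝ} (h2 : MemLp h 2 volume)
    (i : Fin 3) (hd : MemLp (dd i h) 2 volume) :
    Integrable (fun x => 2 * h x * dd i h x * hardyField ε i x) := by
  simpa only [Pi.mul_apply, mul_assoc] using
    integrable_mul_hardyField hε ((h2.integrable_mul hd).const_mul 2) i

lemma integral_sq_mul_dd_hardyField (hε : 0 < ε) {h : E3 → ℝ} (hh : Differentiable ℝ h)
    (h2 : MemLp h 2 volume) (i : Fin 3) (hd : MemLp (dd i h) 2 volume) :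
    ∫ x, h x ^ 2 * dd i (hardyField ε i) x
      = -∫ x, 2 * h x * dd i h x * hardyField ε i x := by
  have hdsq : dd i (fun y => h y ^ 2) = fun x => 2 * h x * dd i h x :=
    funext fun x => dd_sq (hh x) i
  exact (integral_mul_dd_eq_neg i (f := fun y => h y ^ 2) (hh.pow 2)
    (differentiable_hardyField hε i) (integrable_mul_dd_hardyField hε h2.integrable_sq i)
    (hdsq ▸ integrable_mul_dd_mul_hardyField hε h2 i hd)
    (integrable_mul_hardyField hε h2.integrable_sq i)).trans (by rw [hdsq])

end HardyField

theorem integral_sq_div_regNormSq_le {ε : ℝ} (hε : 0 < ε) {h : E3 → ℝ} (hh : ContDiff ℝ 1 h)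
    (h2 : MemLp h 2 volume) (hd : ∀ i, MemLp (dd i h) 2 volume) :
    ∫ x, h x ^ 2 / regNormSq ε x ≤ 4 * ∫ x, ‖gradient h x‖ ^ 2 := by
  have hdiff : Differentiable ℝ h := hh.differentiable one_ne_zero
  have iA := integrable_div_regNormSq hε h2.integrable_sq
  have iDiv i := integrable_mul_dd_hardyField hε h2.integrable_sq i
  have iFlux i := integrable_mul_dd_mul_hardyField hε h2 i (hd i)
  have hflux x : -∑ i, 2 * h x * dd i h x * hardyField ε i x
      = -(2 * h x * ⟪gradient h x, x⟫) / regNormSq ε x := by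
    simp only [inner_gradient_eq_sum, hardyField, Finset.mul_sum, Finset.sum_div, neg_div]
    congr 1
    exact Finset.sum_congr rfl fun i _ => by ring
  have key : ∫ x, h x ^ 2 / regNormSq ε x
      ≤ ∫ x, (h x ^ 2 / regNormSq ε x / 2 + 2 * ‖gradient h x‖ ^ 2) :=
    calc ∫ x, h x ^ 2 / regNormSq ε x
        ≤ ∫ x, ∑ i, h x ^ 2 * dd i (hardyField ε i) x :=
          integral_mono iA (integrable_finsetSum _ fun i _ => iDiv i) fun x => by
            simpa only [← Finset.mul_sum, div_eq_mul_inv] using mul_le_mul_of_nonneg_left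
              (inv_regNormSq_le_sum_dd_hardyField hε x) (sq_nonneg (h x))
      _ = ∫ x, -∑ i, 2 * h x * dd i h x * hardyField ε i x := by
          rw [integral_finsetSum _ fun i _ => iDiv i, integral_neg,
            integral_finsetSum _ fun i _ => iFlux i, ← Finset.sum_neg_distrib]
          exact Finset.sum_congr rfl fun i _ =>
            integral_sq_mul_dd_hardyField hε hdiff h2 i (hd i)
      _ ≤ ∫ x, (h x ^ 2 / regNormSq ε x / 2 + 2 * ‖gradient h x‖ ^ 2) :=
          integral_mono (integrable_finsetSum _ fun i _ => iFlux i).neg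
            ((iA.div_const 2).add ((integrable_norm_gradient_sq hd).const_mul 2)) fun x =>
            (hflux x).trans_le (neg_two_mul_inner_div_le _ _ _ (regNormSq_pos hε x)
              (le_add_of_nonneg_right hε.le))
  rw [integral_add (iA.div_const 2) ((integrable_norm_gradient_sq hd).const_mul 2),
    integral_div, integral_const_mul] at key
  linarith

lemma memLp_lap {h : E3 → ℝ} (hdd : ∀ i, MemLp (dd i (dd i h)) 2 volume) :
    MemLp (lap h) 2 volume :=
  memLp_finsetSum Finset.univ fun i _ => hdd i

section GradientEstimate

variable {h : E3 → ℝ} (hh : ContDiff ℝ 2 h) (h2 : MemLp h 2 volume)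
  (hd : ∀ i, MemLp (dd i h) 2 volume) (hdd : ∀ i, MemLp (dd i (dd i h)) 2 volume)
  (hxl : MemLp (fun x => ‖x‖ * lap h x) 2 volume)
include hh h2 hd hdd hxl

theorem integral_norm_gradient_sq_le_add {ε : ℝ} (hε : 0 < ε) :
    ∫ x, ‖gradient h x‖ ^ 2
      ≤ 4 * (∫ x, (‖x‖ * lap h x) ^ 2) + 4 * ε * ∫ x, lap h x ^ 2 := by
  have iA := integrable_div_regNormSq hε h2.integrable_sq
  have iW := hxl.integrable_sq
  have iL := (memLp_lap hdd).integrable_sq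
  have hardy := integral_sq_div_regNormSq_le hε (hh.of_le one_le_two) h2 hd
  have iAW : Integrable (fun x => h x ^ 2 / regNormSq ε x / 8 + 2 * (‖x‖ * lap h x) ^ 2) :=
    (iA.div_const 8).add (iW.const_mul 2)
  have key : ∫ x, ‖gradient h x‖ ^ 2 ≤ ∫ x, (h x ^ 2 / regNormSq ε x / 8
      + 2 * (‖x‖ * lap h x) ^ 2 + 2 * ε * lap h x ^ 2) := by
    rw [integral_norm_gradient_sq_eq_neg_integral_mul_lap hh h2 hd hdd, ← integral_neg]
    refine integral_mono (h2.integrable_mul (memLp_lap hdd)).neg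
      (iAW.add (iL.const_mul (2 * ε))) fun x => ?_
    calc -(h x * lap h x)
        ≤ h x ^ 2 / regNormSq ε x / 8 + 2 * regNormSq ε x * lap h x ^ 2 :=
          neg_mul_le_sq_div_add (regNormSq_pos hε x)
      _ = _ := by unfold regNormSq; ring
  rw [integral_add iAW (iL.const_mul (2 * ε)),
    integral_add (iA.div_const 8) (iW.const_mul 2), integral_div, integral_const_mul,
    integral_const_mul] at key
  linarith

theorem integral_norm_gradient_sq_le :
    ∫ x, ‖gradient h x‖ ^ 2 ≤ 4 * ∫ x, (‖x‖ * lap h x) ^ 2 := by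
  have hlim : Tendsto (fun ε => 4 * (∫ x, (‖x‖ * lap h x) ^ 2) + 4 * ε * ∫ x, lap h x ^ 2)
      (𝓝[>] 0) (𝓝 (4 * ∫ x, (‖x‖ * lap h x) ^ 2)) := by
    have : Continuous fun ε : ℝ => 4 * (∫ x, (‖x‖ * lap h x) ^ 2) + 4 * ε * ∫ x, lap h x ^ 2 := by
      fun_prop
    simpa using (this.tendsto 0).mono_left nhdsWithin_le_nhds
  exact ge_of_tendsto hlim (eventually_nhdsWithin_of_forall fun ε hε =>
    integral_norm_gradient_sq_le_add hh h2 hd hdd hxl hε)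

end GradientEstimate

/-- **Weighted gradient estimate:** `‖∇h‖_{L²} ≤ C ‖ |x| Δh ‖_{L²}` for `h ∈ H²(ℝ³)`
with `|x| Δh ∈ L²`. -/
theorem gradient_estimate :
    ∃ C : ℝ, 0 < C ∧ ∀ h : E3 → ℝ,
      ContDiff ℝ 2 h →
      MemLp h 2 volume →
      (∀ i, MemLp (dd i h) 2 volume) →
      (∀ i j, MemLp (dd i (dd j h)) 2 volume) →
      MemLp (fun x => ‖x‖ * lap h x) 2 volume →
      Real.sqrt (∫ x, ‖gradient h x‖ ^ 2)
        ≤ C * Real.sqrt (∫ x, (‖x‖ * lap h x) ^ 2) := by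
  refine ⟨2, two_pos, fun h hh h2 hd hdd hxl => ?_⟩
  rw [sqrt_le_left (by positivity), mul_pow, sq_sqrt (integral_nonneg fun x => sq_nonneg _)]
  linarith [integral_norm_gradient_sq_le hh h2 hd (fun i => hdd i i) hxl]

end
end
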